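/- Let a > 0 and let H := L²(ℝ; ℂ). Let χ₊ and χ₋ be the bounded operators on H of multiplication by the indicator functions of (a,+∞) and of (−∞,−a) respectively, and let S : H → H be the reflection operator (Sψ)(t) = ψ(−t). Suppose D : H → H is a bounded linear operator and there exist bounded linear operators L, K : H → H such that D∘χ₊ = L + K, χ₊∘L∘χ₊ = L, χ₊∘K∘χ₊ = K, ‖L‖ ≤ 1/√2, K is compact, and in addition D∘χ₋ is compact. Define the bounded operator 𝔻 on H⁴ = H × H × H × H by (𝔻Φ)_j := D(S(Φ_{j+1 mod 4})) + S(D(Φ_{j−1 mod 4})) for j = 0,1,2,3. Then there exist bounded linear operators 𝕃 and 𝕂 on H⁴ with 𝕂 compact such that, for every Φ ∈ H⁴ all four of whose components vanish almost everywhere on (−a, a), one has 𝔻Φ = 𝕃Φ + 𝕂Φ and ‖𝕃Φ‖_{H⁴} ≤ (1/√2) ‖Φ‖_{H⁴}. -/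

import Mathlib

open MeasureTheory Set

/-- The Hilbert space `H = L²(ℝ; ℂ)`. -/
noncomputable abbrev Hsp : Type := Lp ℂ 2 (volume : Measure ℝ)

/-- `H⁴` with the Hilbert norm `‖Φ‖² = Σ_{j=0}^{3} ‖Φ_j‖²`. -/
noncomputable abbrev Hsp4 : Type := PiLp 2 (fun _ : Fin 4 => Hsp)

/-!
Write `P = χ₊`, `M = χ₋`. A function `φ` vanishing on `(−a, a)` satisfies `φ = Pφ + Mφ` with
orthogonal summands, and the reflection `S` preserves this class; hence `Dφ = Lφ + (K + DM)φ` on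
it, and `𝕃Φ_j = L S Φ_{j+1} + S L Φ_{j−1}` collects the non-compact part. Since `L = P L P` and
`S P = M S`, the two summands lie in the ranges of `P` and `M`, so they are orthogonal, while
`‖L S Φ_{j+1}‖ = ‖L S M Φ_{j+1}‖ ≤ ‖L‖ ‖M Φ_{j+1}‖` and `‖S L Φ_{j−1}‖ ≤ ‖L‖ ‖P Φ_{j−1}‖`.
Summed over `j`, each of `‖PΦ_j‖²`, `‖MΦ_j‖²` occurs once, giving `‖𝕃Φ‖ ≤ ‖L‖ ‖Φ‖`.
-/

theorem IsCompactOperator.pi {ι M : Type*} {N : ι → Type*} [Finite ι] [Zero M]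
    [TopologicalSpace M] [∀ i, TopologicalSpace (N i)] {f : ∀ i, M → N i}
    (hf : ∀ i, IsCompactOperator (f i)) : IsCompactOperator fun x i => f i x := by
  choose K hK hfK using hf
  exact ⟨univ.pi K, isCompact_univ_pi hK,
    Filter.mem_of_superset (Filter.iInter_mem.2 hfK) fun x hx i _ => mem_iInter.1 hx i⟩

theorem IsIdempotentElem.mul_eq_of_mul_mul_eq {R : Type*} [Semigroup R] {p l : R}
    (hp : IsIdempotentElem p) (hl : p * l * p = l) : l * p = l := by
  rw [← hl, mul_assoc, hp.eq]

section ShiftBlock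

variable {𝕜 ι E : Type*} [NontriviallyNormedField 𝕜] [NormedAddCommGroup E] [NormedSpace 𝕜 E]

noncomputable def shiftBlockOp (σ τ : ι → ι) (T₁ T₂ : E →L[𝕜] E) :
    PiLp 2 (fun _ : ι => E) →L[𝕜] PiLp 2 (fun _ : ι => E) :=
  (PiLp.continuousLinearEquiv 2 𝕜 _).symm.toContinuousLinearMap ∘L
    ContinuousLinearMap.pi fun j => T₁ ∘L PiLp.proj 2 _ (σ j) + T₂ ∘L PiLp.proj 2 _ (τ j)

@[simp]
theorem shiftBlockOp_apply (σ τ : ι → ι) (T₁ T₂ : E →L[𝕜] E) (Φ : PiLp 2 fun _ : ι => E)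
    (j : ι) : shiftBlockOp σ τ T₁ T₂ Φ j = T₁ (Φ (σ j)) + T₂ (Φ (τ j)) :=
  rfl

theorem isCompactOperator_shiftBlockOp [Finite ι] (σ τ : ι → ι) {T₁ T₂ : E →L[𝕜] E}
    (h₁ : IsCompactOperator T₁) (h₂ : IsCompactOperator T₂) :
    IsCompactOperator (shiftBlockOp σ τ T₁ T₂) := by
  have hpi : IsCompactOperator fun (Φ : PiLp 2 fun _ : ι => E) j =>
      T₁ (Φ (σ j)) + T₂ (Φ (τ j)) :=
    .pi fun j => (h₁.comp_clm (PiLp.proj (𝕜 := 𝕜) 2 (fun _ : ι => E) (σ j))).add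
      (h₂.comp_clm (PiLp.proj (𝕜 := 𝕜) 2 (fun _ : ι => E) (τ j)))
  exact hpi.clm_comp (PiLp.continuousLinearEquiv 2 𝕜 _).symm.toContinuousLinearMap

end ShiftBlock

section SplitReflection

variable {𝕜 E : Type*} [RCLike 𝕜] [NormedAddCommGroup E] [InnerProductSpace 𝕜 E]
  {P M S L : E →L[𝕜] E}

theorem norm_sq_add_eq_of_inner_eq_zero {x y : E} (h : inner 𝕜 x y = 0) :
    ‖x + y‖ ^ 2 = ‖x‖ ^ 2 + ‖y‖ ^ 2 := by
  simpa only [sq] using norm_add_sq_eq_norm_sq_add_norm_sq_of_inner_eq_zero x y h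

theorem inner_apply_reflection_apply_eq_zero (hPM : ∀ x y, inner 𝕜 (P x) (M y) = 0)
    (hSP : ∀ x, S (P x) = M (S x)) (hL : P * L * P = L) (x y : E) :
    inner 𝕜 (L x) (S (L y)) = 0 := by
  have hPLP : ∀ z, P (L (P z)) = L z := DFunLike.congr_fun hL
  rw [← hPLP x, ← hPLP y, hSP]
  exact hPM _ _

theorem norm_sq_add_reflection_le (hP : IsIdempotentElem P)
    (hPM : ∀ x y, inner 𝕜 (P x) (M y) = 0) (hPS : ∀ x, P (S x) = S (M x))
    (hSP : ∀ x, S (P x) = M (S x)) (hS : ∀ x, ‖S x‖ = ‖x‖) (hL : P * L * P = L) (x y : E) :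
    ‖L (S x) + S (L y)‖ ^ 2 ≤ ‖L‖ ^ 2 * (‖M x‖ ^ 2 + ‖P y‖ ^ 2) := by
  have hLP : ∀ z, L (P z) = L z := DFunLike.congr_fun (hP.mul_eq_of_mul_mul_eq hL)
  have hx : ‖L (S x)‖ ≤ ‖L‖ * ‖M x‖ := by
    rw [← hLP, hPS, ← hS (M x)]
    exact L.le_opNorm _
  have hy : ‖S (L y)‖ ≤ ‖L‖ * ‖P y‖ := by
    rw [hS, ← hLP]
    exact L.le_opNorm _
  calc ‖L (S x) + S (L y)‖ ^ 2 = ‖L (S x)‖ ^ 2 + ‖S (L y)‖ ^ 2 :=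
        norm_sq_add_eq_of_inner_eq_zero (inner_apply_reflection_apply_eq_zero hPM hSP hL _ _)
    _ ≤ (‖L‖ * ‖M x‖) ^ 2 + (‖L‖ * ‖P y‖) ^ 2 := by gcongr
    _ = ‖L‖ ^ 2 * (‖M x‖ ^ 2 + ‖P y‖ ^ 2) := by ring

theorem norm_shiftBlockOp_le {ι : Type*} [Fintype ι] (σ τ : ι ≃ ι) (hP : IsIdempotentElem P)
    (hPM : ∀ x y, inner 𝕜 (P x) (M y) = 0) (hPS : ∀ x, P (S x) = S (M x))
    (hSP : ∀ x, S (P x) = M (S x)) (hS : ∀ x, ‖S x‖ = ‖x‖) (hL : P * L * P = L)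
    {Φ : PiLp 2 fun _ : ι => E} (hΦ : ∀ j, P (Φ j) + M (Φ j) = Φ j) :
    ‖shiftBlockOp σ τ (L * S) (S * L) Φ‖ ≤ ‖L‖ * ‖Φ‖ := by
  have hsplit : ∀ j, ‖Φ j‖ ^ 2 = ‖P (Φ j)‖ ^ 2 + ‖M (Φ j)‖ ^ 2 := fun j => by
    conv_lhs => rw [← hΦ j]
    exact norm_sq_add_eq_of_inner_eq_zero (hPM _ _)
  have hsq : ‖shiftBlockOp σ τ (L * S) (S * L) Φ‖ ^ 2 ≤ (‖L‖ * ‖Φ‖) ^ 2 := calc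
    _ = ∑ j, ‖L (S (Φ (σ j))) + S (L (Φ (τ j)))‖ ^ 2 := by
        rw [PiLp.norm_sq_eq_of_L2]
        rfl
    _ ≤ ∑ j, ‖L‖ ^ 2 * (‖M (Φ (σ j))‖ ^ 2 + ‖P (Φ (τ j))‖ ^ 2) :=
        Finset.sum_le_sum fun j _ => norm_sq_add_reflection_le hP hPM hPS hSP hS hL _ _
    _ = ‖L‖ ^ 2 * ∑ j, (‖P (Φ j)‖ ^ 2 + ‖M (Φ j)‖ ^ 2) := by
        rw [← Finset.mul_sum, Finset.sum_add_distrib, Finset.sum_add_distrib,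
          σ.sum_comp fun j => ‖M (Φ j)‖ ^ 2, τ.sum_comp fun j => ‖P (Φ j)‖ ^ 2, add_comm]
    _ = (‖L‖ * ‖Φ‖) ^ 2 := by
        simp only [mul_pow, PiLp.norm_sq_eq_of_L2, hsplit]
  exact (pow_le_pow_iff_left₀ (norm_nonneg _) (by positivity) two_ne_zero).1 hsq

theorem exists_shiftBlock_decomposition {ι : Type*} [Fintype ι] (σ τ : ι ≃ ι) {D K : E →L[𝕜] E}
    (V : Set E) (hP : IsIdempotentElem P) (hPM : ∀ x y, inner 𝕜 (P x) (M y) = 0)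
    (hPS : ∀ x, P (S x) = S (M x)) (hSP : ∀ x, S (P x) = M (S x)) (hS : ∀ x, ‖S x‖ = ‖x‖)
    (hV : ∀ x ∈ V, P x + M x = x) (hSV : ∀ x ∈ V, S x ∈ V) (hDP : D * P = L + K)
    (hL : P * L * P = L) (hK : IsCompactOperator K) (hDM : IsCompactOperator (D * M)) :
    ∃ 𝕃 𝕂 : (PiLp 2 fun _ : ι => E) →L[𝕜] PiLp 2 fun _ : ι => E, IsCompactOperator 𝕂 ∧
      ∀ Φ : PiLp 2 fun _ : ι => E, (∀ j, Φ j ∈ V) →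
        (∀ j, D (S (Φ (σ j))) + S (D (Φ (τ j))) = 𝕃 Φ j + 𝕂 Φ j) ∧ ‖𝕃 Φ‖ ≤ ‖L‖ * ‖Φ‖ := by
  have hKDM : IsCompactOperator (K + D * M) := hK.add hDM
  have hD : ∀ x ∈ V, D x = L x + (K + D * M) x := fun x hx => calc
    D x = (D * P) x + (D * M) x := by
      conv_lhs => rw [← hV x hx]
      exact map_add D _ _
    _ = L x + (K + D * M) x := by simp only [hDP, add_apply, add_assoc]
  refine ⟨shiftBlockOp σ τ (L * S) (S * L), shiftBlockOp σ τ ((K + D * M) * S) (S * (K + D * M)),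
    isCompactOperator_shiftBlockOp σ τ (hKDM.comp_clm S) (hKDM.clm_comp S), fun Φ hΦ => ⟨?_,
    norm_shiftBlockOp_le σ τ hP hPM hPS hSP hS hL fun j => hV _ (hΦ j)⟩⟩
  intro j
  simp only [shiftBlockOp_apply, mul_apply_eq_comp, hD _ (hSV _ (hΦ _)), hD _ (hΦ _),
    map_add]
  abel

end SplitReflection

section IndicatorOperator

variable {α 𝕜 E : Type*} [MeasurableSpace α] {μ : Measure α}

theorem isIdempotentElem_of_ae_eq_indicator [NormedField 𝕜] [NormedAddCommGroup E]
    [NormedSpace 𝕜 E] {p : ENNReal} [Fact (1 ≤ p)] {Q : Lp E p μ →L[𝕜] Lp E p μ} {s : Set α}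
    (hQ : ∀ φ, Q φ =ᵐ[μ] s.indicator φ) : IsIdempotentElem Q := by
  ext1 φ
  refine Lp.ext ((hQ _).trans ?_)
  calc s.indicator (Q φ) =ᵐ[μ] s.indicator (s.indicator φ) := (hQ φ).indicator
    _ = s.indicator φ := by rw [indicator_indicator, inter_self]
    _ =ᵐ[μ] Q φ := (hQ φ).symm

theorem add_eq_self_of_ae_eq_indicator [NormedAddCommGroup E] {p : ENNReal}
    {Q₁ Q₂ : Lp E p μ → Lp E p μ} {s t : Set α} (hQ₁ : ∀ φ, Q₁ φ =ᵐ[μ] s.indicator φ)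
    (hQ₂ : ∀ φ, Q₂ φ =ᵐ[μ] t.indicator φ) (hst : Disjoint s t) {φ : Lp E p μ}
    (hφ : ∀ᵐ x ∂μ, x ∉ s ∪ t → φ x = 0) : Q₁ φ + Q₂ φ = φ := by
  refine Lp.ext ?_
  filter_upwards [Lp.coeFn_add (Q₁ φ) (Q₂ φ), hQ₁ φ, hQ₂ φ, hφ] with x hadd h₁ h₂ hx
  rw [hadd, Pi.add_apply, h₁, h₂, ← congrFun (indicator_union_of_disjoint hst φ) x]
  by_cases hmem : x ∈ s ∪ t
  · exact indicator_of_mem hmem _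
  · rw [indicator_of_notMem hmem, hx hmem]

theorem inner_eq_zero_of_ae_eq_indicator [RCLike 𝕜] [NormedAddCommGroup E]
    [InnerProductSpace 𝕜 E] {Q₁ Q₂ : Lp E 2 μ → Lp E 2 μ} {s t : Set α}
    (hQ₁ : ∀ φ, Q₁ φ =ᵐ[μ] s.indicator φ) (hQ₂ : ∀ φ, Q₂ φ =ᵐ[μ] t.indicator φ)
    (hst : Disjoint s t) (φ ψ : Lp E 2 μ) : inner 𝕜 (Q₁ φ) (Q₂ ψ) = 0 := by
  rw [L2.inner_def]
  refine integral_eq_zero_of_ae ?_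
  filter_upwards [hQ₁ φ, hQ₂ ψ] with x h₁ h₂
  rw [h₁, h₂, Pi.zero_apply]
  by_cases hx : x ∈ s
  · rw [indicator_of_notMem (disjoint_left.1 hst hx), inner_zero_right]
  · rw [indicator_of_notMem hx, inner_zero_left]

end IndicatorOperator

section Reflection

variable {E : Type*} [NormedAddCommGroup E] {p : ENNReal}

theorem norm_eq_of_ae_eq_comp_neg {φ ψ : Lp E p (volume : Measure ℝ)}
    (h : ψ =ᵐ[volume] fun t => φ (-t)) : ‖ψ‖ = ‖φ‖ := by
  have hψ : ψ = Lp.compMeasurePreserving Neg.neg (Measure.measurePreserving_neg volume) φ :=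
    Lp.ext (h.trans (Lp.coeFn_compMeasurePreserving _ _).symm)
  rw [hψ, Lp.norm_compMeasurePreserving]

theorem ae_eq_zero_of_ae_eq_comp_neg {φ ψ : Lp E p (volume : Measure ℝ)} {s : Set ℝ}
    (h : ψ =ᵐ[volume] fun t => φ (-t)) (hφ : ∀ᵐ t ∂volume, t ∈ s → φ t = 0) :
    ∀ᵐ t ∂volume, t ∈ -s → ψ t = 0 := by
  filter_upwards [h, (Measure.measurePreserving_neg volume).quasiMeasurePreserving.ae hφ]
    with t hψ hφt hts
  rw [hψ]
  exact hφt hts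

theorem apply_reflection_eq_reflection_apply {S Q Q' : Lp E p (volume : Measure ℝ) → Lp E p volume}
    {s : Set ℝ} (hQ : ∀ φ, Q φ =ᵐ[volume] s.indicator φ)
    (hQ' : ∀ φ, Q' φ =ᵐ[volume] (-s).indicator φ)
    (hS : ∀ φ, S φ =ᵐ[volume] fun t => φ (-t)) (φ : Lp E p volume) : Q (S φ) = S (Q' φ) := by
  have hneg := (Measure.measurePreserving_neg (volume : Measure ℝ)).quasiMeasurePreserving
  refine Lp.ext ?_
  filter_upwards [hQ (S φ), hS φ, hS (Q' φ), hneg.ae_eq (hQ' φ)] with t h₁ h₂ h₃ h₄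
  rw [Function.comp_apply, Function.comp_apply] at h₄
  rw [h₁, h₃, h₄]
  by_cases ht : t ∈ s
  · rw [indicator_of_mem ht, indicator_of_mem (neg_mem_neg.2 ht), h₂]
  · rw [indicator_of_notMem ht, indicator_of_notMem (mt neg_mem_neg.1 ht)]

end Reflection

theorem ae_eq_zero_of_notMem_Ioi_union_Iio {E : Type*} [Zero E] {μ : Measure ℝ}
    [NullSingletonClass μ] {f : ℝ → E} {a : ℝ} (hf : ∀ᵐ t ∂μ, t ∈ Ioo (-a) a → f t = 0) :
    ∀ᵐ t ∂μ, t ∉ Ioi a ∪ Iio (-a) → f t = 0 := by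
  filter_upwards [hf, (Ioo_ae_eq_Icc (μ := μ)).mem_iff] with t hft hIoo ht
  refine hft (hIoo.2 ?_)
  simp only [mem_union, mem_Ioi, mem_Iio, not_or, not_lt] at ht
  exact ⟨ht.2, ht.1⟩

theorem stmt_16_general (a : ℝ) (ha : 0 < a)
    (χp χm S D L K : Hsp →L[ℂ] Hsp)
    (hχp : ∀ φ : Hsp, (χp φ : ℝ → ℂ) =ᵐ[volume] (Set.Ioi a).indicator (φ : ℝ → ℂ))
    (hχm : ∀ φ : Hsp, (χm φ : ℝ → ℂ) =ᵐ[volume] (Set.Iio (-a)).indicator (φ : ℝ → ℂ))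
    (hS : ∀ φ : Hsp, (S φ : ℝ → ℂ) =ᵐ[volume] fun t => (φ : ℝ → ℂ) (-t))
    (hDχp : D.comp χp = L + K)
    (hL : χp.comp (L.comp χp) = L)
    (hLnorm : ‖L‖ ≤ 1 / Real.sqrt 2)
    (hKcpt : IsCompactOperator K)
    (hDχm : IsCompactOperator (D.comp χm)) :
    ∃ 𝕃 𝕂 : Hsp4 →L[ℂ] Hsp4, IsCompactOperator 𝕂 ∧
      ∀ Φ : Hsp4,
        (∀ j : Fin 4, ∀ᵐ t ∂(volume : Measure ℝ),
          t ∈ Set.Ioo (-a) a → (Φ j : ℝ → ℂ) t = 0) →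
        (∀ j : Fin 4, D (S (Φ (j + 1))) + S (D (Φ (j - 1))) = 𝕃 Φ j + 𝕂 Φ j) ∧
        ‖𝕃 Φ‖ ≤ (1 / Real.sqrt 2) * ‖Φ‖ := by
  have hdisj : Disjoint (Ioi a) (Iio (-a)) := Ioi_disjoint_Iio_of_le (by linarith)
  have hχp' : ∀ φ : Hsp, (χp φ : ℝ → ℂ) =ᵐ[volume] (-Iio (-a)).indicator φ := by
    simpa only [neg_Iio, neg_neg] using hχp
  have hχm' : ∀ φ : Hsp, (χm φ : ℝ → ℂ) =ᵐ[volume] (-Ioi a).indicator φ := by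
    simpa only [neg_Ioi] using hχm
  obtain ⟨𝕃, 𝕂, h𝕂, hdecomp⟩ := exists_shiftBlock_decomposition (Equiv.addRight (1 : Fin 4))
    (Equiv.subRight 1) {φ : Hsp | ∀ᵐ t ∂volume, t ∈ Ioo (-a) a → φ t = 0}
    (isIdempotentElem_of_ae_eq_indicator hχp) (inner_eq_zero_of_ae_eq_indicator hχp hχm hdisj)
    (apply_reflection_eq_reflection_apply hχp hχm' hS)
    (fun φ => (apply_reflection_eq_reflection_apply hχm hχp' hS φ).symm)
    (fun φ => norm_eq_of_ae_eq_comp_neg (hS φ))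
    (fun φ hφ => add_eq_self_of_ae_eq_indicator hχp hχm hdisj
      (ae_eq_zero_of_notMem_Ioi_union_Iio hφ))
    (fun φ hφ => by
      simpa only [mem_ofPred_eq, neg_Ioo, neg_neg] using ae_eq_zero_of_ae_eq_comp_neg (hS φ) hφ)
    hDχp ((mul_assoc _ _ _).trans hL) hKcpt hDχm
  exact ⟨𝕃, 𝕂, h𝕂, fun Φ hΦ => ⟨(hdecomp Φ hΦ).1, (hdecomp Φ hΦ).2.trans (by gcongr)⟩⟩

/-- Abstract block-operator decomposition (Appendix A of the paper): if
`D∘χ₊ = L + K` with `χ₊ L χ₊ = L`, `χ₊ K χ₊ = K`, `‖L‖ ≤ 1/√2`, `K` compact, and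
`D∘χ₋` compact, then the block operator `𝔻`, `(𝔻Φ)_j = D S Φ_{j+1} + S D Φ_{j-1}`
(indices mod 4), decomposes on the subspace of `Φ` vanishing a.e. on `(−a,a)` as
`𝕃 + 𝕂` with `𝕂` compact and `‖𝕃Φ‖ ≤ (1/√2)‖Φ‖`. -/
theorem stmt_16 (a : ℝ) (ha : 0 < a)
    (χp χm S D L K : Hsp →L[ℂ] Hsp)
    (hχp : ∀ φ : Hsp, (χp φ : ℝ → ℂ) =ᵐ[volume] (Set.Ioi a).indicator (φ : ℝ → ℂ))
    (hχm : ∀ φ : Hsp, (χm φ : ℝ → ℂ) =ᵐ[volume] (Set.Iio (-a)).indicator (φ : ℝ → ℂ))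
    (hS : ∀ φ : Hsp, (S φ : ℝ → ℂ) =ᵐ[volume] fun t => (φ : ℝ → ℂ) (-t))
    (hDχp : D.comp χp = L + K)
    (hL : χp.comp (L.comp χp) = L)
    (hK : χp.comp (K.comp χp) = K)
    (hLnorm : ‖L‖ ≤ 1 / Real.sqrt 2)
    (hKcpt : IsCompactOperator K)
    (hDχm : IsCompactOperator (D.comp χm)) :
    ∃ 𝕃 𝕂 : Hsp4 →L[ℂ] Hsp4, IsCompactOperator 𝕂 ∧
      ∀ Φ : Hsp4,
        (∀ j : Fin 4, ∀ᵐ t ∂(volume : Measure ℝ),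
          t ∈ Set.Ioo (-a) a → (Φ j : ℝ → ℂ) t = 0) →
        (∀ j : Fin 4, D (S (Φ (j + 1))) + S (D (Φ (j - 1))) = 𝕃 Φ j + 𝕂 Φ j) ∧
        ‖𝕃 Φ‖ ≤ (1 / Real.sqrt 2) * ‖Φ‖ :=
  stmt_16_general a ha χp χm S D L K hχp hχm hS hDχp hL hLnorm hKcpt hDχm
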